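/- Let S be a discrete valuation ring with maximal ideal generated by x, let n ≥ 1, and let R = S/(x^n). Then for each integer i with 1 ≤ i ≤ n−1 there exists a short exact sequence of R-modules 0 → R/(x^i) → R/(x^{i−1}) ⊕ R/(x^{i+1}) → R/(x^i) → 0, where x^0 = 1. -/

import Mathlib

/-!
For any commutative ring `R` and `t : R`, the maps `a ↦ (a, a t)` and `(a, b) ↦ a t - b` between
`R/(tⁱ)`, `R/(tⁱ⁻¹) × R/(tⁱ⁺¹)` and `R/(tⁱ)` form a complex that is exact in the middle, and the
second map is onto. The first map is injective as soon as multiplication by `t` is injective from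
`R/(tⁱ)` to `R/(tⁱ⁺¹)`. For `R = S/(xⁿ)` and `i + 1 ≤ n` this can be checked in `S`, where it says
that `x` is a nonzero divisor.
-/

section QuotientPow

variable {R : Type*} [CommRing R] (t : R)

def quotPowMul (j : ℕ) : R ⧸ Ideal.span {t ^ j} →ₗ[R] R ⧸ Ideal.span {t ^ (j + 1)} :=
  Submodule.mapQ _ _ (LinearMap.mulRight R t) fun r hr => by
    obtain ⟨c, rfl⟩ := Ideal.mem_span_singleton'.1 hr
    exact Ideal.mem_span_singleton'.2 ⟨c, by simp only [LinearMap.mulRight_apply]; ring⟩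

lemma span_pow_succ_le (j : ℕ) : Ideal.span {t ^ (j + 1)} ≤ Ideal.span {t ^ j} :=
  Ideal.span_singleton_le_span_singleton.2 <| pow_dvd_pow t j.le_succ

def quotPowFactor (j : ℕ) : R ⧸ Ideal.span {t ^ (j + 1)} →ₗ[R] R ⧸ Ideal.span {t ^ j} :=
  Submodule.factor <| span_pow_succ_le t j

@[simp]
lemma quotPowMul_mk (j : ℕ) (r : R) :
    quotPowMul t j (Submodule.Quotient.mk r) = Submodule.Quotient.mk (r * t) := rfl

@[simp]
lemma quotPowFactor_mk (j : ℕ) (r : R) :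
    quotPowFactor t j (Submodule.Quotient.mk r) = Submodule.Quotient.mk r := rfl

lemma quotPowFactor_surjective (j : ℕ) : Function.Surjective (quotPowFactor t j) :=
  Submodule.factor_surjective <| span_pow_succ_le t j

lemma quotPowMul_injective {j : ℕ} (h : ∀ r : R, t ^ (j + 1) ∣ r * t → t ^ j ∣ r) :
    Function.Injective (quotPowMul t j) := by
  rw [← LinearMap.ker_eq_bot, LinearMap.ker_eq_bot']
  intro m hm
  obtain ⟨r, rfl⟩ := Submodule.Quotient.mk_surjective _ m
  rw [quotPowMul_mk, Submodule.Quotient.mk_eq_zero, Ideal.mem_span_singleton] at hm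
  rw [Submodule.Quotient.mk_eq_zero, Ideal.mem_span_singleton]
  exact h r hm

theorem exact_quotPow (k : ℕ) :
    Function.Exact ((quotPowFactor t k).prod (quotPowMul t (k + 1)))
      ((quotPowMul t k).coprod (-quotPowFactor t (k + 1))) := by
  rintro ⟨a, b⟩
  obtain ⟨a, rfl⟩ := Submodule.Quotient.mk_surjective _ a
  obtain ⟨b, rfl⟩ := Submodule.Quotient.mk_surjective _ b
  simp only [LinearMap.coprod_apply, quotPowMul_mk, LinearMap.neg_apply, quotPowFactor_mk,
    ← Submodule.Quotient.mk_sub, ← sub_eq_add_neg, Submodule.Quotient.mk_eq_zero,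
    Ideal.mem_span_singleton, Set.mem_range, Prod.ext_iff, LinearMap.prod_apply,
    Function.prod_apply]
  constructor
  · rintro ⟨d, hd⟩
    refine ⟨Submodule.Quotient.mk (a - t ^ k * d), ?_, ?_⟩
    · rw [quotPowFactor_mk, Submodule.Quotient.eq, Ideal.mem_span_singleton]
      exact ⟨-d, by ring⟩
    · rw [quotPowMul_mk]
      congr 1
      linear_combination hd
  · rintro ⟨c, hca, hcb⟩
    obtain ⟨c, rfl⟩ := Submodule.Quotient.mk_surjective _ c
    rw [quotPowFactor_mk, Submodule.Quotient.eq, Ideal.mem_span_singleton] at hca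
    rw [quotPowMul_mk, Submodule.Quotient.eq, Ideal.mem_span_singleton] at hcb
    obtain ⟨e, he⟩ := hca
    obtain ⟨f, hf⟩ := hcb
    exact ⟨t * f - e, by linear_combination hf - t * he⟩

theorem exists_injective_surjective_range_eq_ker_quotPow {k : ℕ}
    (h : ∀ r : R, t ^ (k + 2) ∣ r * t → t ^ (k + 1) ∣ r) :
    ∃ (f : R ⧸ Ideal.span {t ^ (k + 1)} →ₗ[R]
        (R ⧸ Ideal.span {t ^ k}) × (R ⧸ Ideal.span {t ^ (k + 2)}))
      (g : (R ⧸ Ideal.span {t ^ k}) × (R ⧸ Ideal.span {t ^ (k + 2)}) →ₗ[R]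
        R ⧸ Ideal.span {t ^ (k + 1)}),
      Function.Injective f ∧ Function.Surjective g ∧ LinearMap.range f = LinearMap.ker g := by
  refine ⟨_, _, fun a b hab => quotPowMul_injective t h (congrArg Prod.snd hab), fun y => ?_,
    ((exact_quotPow t k).linearMap_ker_eq).symm⟩
  obtain ⟨z, rfl⟩ := quotPowFactor_surjective t (k + 1) y
  exact ⟨(0, -z), by simp⟩

end QuotientPow

section QuotientByPow

variable {S : Type*} [CommRing S] {x : S} {n j : ℕ}

local notation "t" => Ideal.Quotient.mk (Ideal.span {x ^ n}) x

lemma mk_pow_dvd_mk_iff (hj : j ≤ n) (s : S) :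
    t ^ j ∣ Ideal.Quotient.mk (Ideal.span {x ^ n}) s ↔ x ^ j ∣ s := by
  have hspan : Ideal.span {t ^ j} = (Ideal.span {x ^ j}).map (Ideal.Quotient.mk _) := by
    rw [Ideal.map_span, Set.image_singleton, map_pow]
  rw [← Ideal.mem_span_singleton, hspan, Ideal.mem_quotient_iff_mem
    (Ideal.span_singleton_le_span_singleton.2 (pow_dvd_pow x hj)), Ideal.mem_span_singleton]

lemma pow_dvd_of_pow_succ_dvd_mul_mk [IsDomain S] (hx : x ≠ 0) (hj : j + 1 ≤ n)
    (r : S ⧸ Ideal.span {x ^ n}) (h : t ^ (j + 1) ∣ r * t) : t ^ j ∣ r := by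
  obtain ⟨s, rfl⟩ := Ideal.Quotient.mk_surjective r
  rw [← map_mul, mk_pow_dvd_mk_iff hj, pow_succ] at h
  rw [mk_pow_dvd_mk_iff (by omega)]
  exact (mul_dvd_mul_iff_right hx).1 h

end QuotientByPow

open IsLocalRing

theorem exists_ses_over_artinian_hypersurface
    (S : Type) [CommRing S] [IsDomain S] [IsDiscreteValuationRing S]
    (x : S) (hx : Ideal.span {x} = maximalIdeal S)
    (n : ℕ) (i : ℕ) (hi1 : 1 ≤ i) (hi2 : i ≤ n - 1) :
    ∃ (f : (S ⧸ Ideal.span {x ^ n}) ⧸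
          Ideal.span {(Ideal.Quotient.mk (Ideal.span {x ^ n}) x) ^ i} →ₗ[S ⧸ Ideal.span {x ^ n}]
        ((S ⧸ Ideal.span {x ^ n}) ⧸
          Ideal.span {(Ideal.Quotient.mk (Ideal.span {x ^ n}) x) ^ (i - 1)}) ×
        ((S ⧸ Ideal.span {x ^ n}) ⧸
          Ideal.span {(Ideal.Quotient.mk (Ideal.span {x ^ n}) x) ^ (i + 1)}))
      (g : ((S ⧸ Ideal.span {x ^ n}) ⧸
          Ideal.span {(Ideal.Quotient.mk (Ideal.span {x ^ n}) x) ^ (i - 1)}) ×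
        ((S ⧸ Ideal.span {x ^ n}) ⧸
          Ideal.span {(Ideal.Quotient.mk (Ideal.span {x ^ n}) x) ^ (i + 1)}) →ₗ[S ⧸ Ideal.span {x ^ n}]
        (S ⧸ Ideal.span {x ^ n}) ⧸
          Ideal.span {(Ideal.Quotient.mk (Ideal.span {x ^ n}) x) ^ i}),
      Function.Injective f ∧ Function.Surjective g ∧
      LinearMap.range f = LinearMap.ker g := by
  obtain ⟨k, rfl⟩ : ∃ k, i = k + 1 := ⟨i - 1, by omega⟩
  have hx0 : x ≠ 0 := ((IsDiscreteValuationRing.irreducible_iff_uniformizer x).2 hx.symm).ne_zero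
  exact exists_injective_surjective_range_eq_ker_quotPow _
    (pow_dvd_of_pow_succ_dvd_mul_mk hx0 (by omega))
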